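/- arXiv:2509.19938 — 5 statements merged into one kernel-verified Lean document; each statement's English description precedes it below -/
import Mathlib

section
/- Let F be a field and H a subgroup of GL₂(F) that is non-abelian. Then every element g ∈ GL₂(F) commuting with all elements of H is a scalar matrix, i.e., g = c • 1 for some c ∈ Fˣ. Consequently, when F = ZMod p with p prime, every such g has square determinant. -/
/-!
A non-scalar endomorphism `f` of a plane has a cyclic vector `v` (otherwise every vector is an
eigenvector and `f` is a homothety). An endomorphism commuting with `f` is determined by its value
at `v`, a combination of `v` and `f v`, so it is of the form `p + t f`. Hence the centralizer of a
non-scalar `2 × 2` matrix is commutative, and an element commuting with a non-abelian subgroup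
must be a scalar `c • 1`, whose determinant `c ^ 2` is a square.
-/

open Module

namespace Module.End

variable {K V : Type*} [Field K] [AddCommGroup V] [Module K V]

theorem exists_linearIndependent_pair_of_forall_ne_smul_one {f : End K V}
    (hf : ∀ c : K, f ≠ c • 1) : ∃ v, LinearIndependent K ![v, f v] := by
  by_contra! h
  obtain ⟨c, hc⟩ := LinearMap.exists_eq_smul_id_of_forall_notLinearIndependent h
  exact hf c hc

theorem exists_eq_smul_one_add_smul_of_commute (hV : finrank K V = 2) {f g : End K V}
    (hf : ∀ c : K, f ≠ c • 1) (hfg : Commute f g) : ∃ p t : K, g = p • 1 + t • f := by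
  obtain ⟨v, hv⟩ := exists_linearIndependent_pair_of_forall_ne_smul_one hf
  have hspan : Submodule.span K {v, f v} = ⊤ := by
    rw [Set.pair_comm]
    simpa [Matrix.range_cons, Set.range_unique, Set.singleton_union] using
      hv.span_eq_top_of_card_eq_finrank (by simp [hV])
  obtain ⟨p, t, hpt⟩ := Submodule.mem_span_pair.mp (hspan ▸ Submodule.mem_top : g v ∈ _)
  refine ⟨p, t, LinearMap.ext_on hspan ?_⟩
  have hgv : g v = (p • 1 + t • f) v := by simp [← hpt]
  rintro _ (rfl | rfl)
  · exact hgv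
  · calc g (f _) = f (g v) := (LinearMap.congr_fun hfg v).symm
      _ = f ((p • 1 + t • f) v) := by rw [hgv]
      _ = (p • 1 + t • f) (f v) := by simp

theorem commute_of_commute_of_forall_ne_smul_one (hV : finrank K V = 2) {f g h : End K V}
    (hf : ∀ c : K, f ≠ c • 1) (hg : Commute f g) (hh : Commute f h) : Commute g h := by
  obtain ⟨p, t, rfl⟩ := exists_eq_smul_one_add_smul_of_commute hV hf hg
  obtain ⟨q, u, rfl⟩ := exists_eq_smul_one_add_smul_of_commute hV hf hh
  simp only [Commute, SemiconjBy, add_mul, mul_add, smul_mul_smul_comm, one_mul, mul_one]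
  module

end Module.End

theorem Matrix.commute_of_commute_of_forall_ne_smul_one {K : Type*} [Field K]
    {M A B : Matrix (Fin 2) (Fin 2) K} (hM : ∀ c : K, M ≠ c • 1)
    (hA : Commute M A) (hB : Commute M B) : Commute A B := by
  let e := Matrix.toLinAlgEquiv' (R := K) (n := Fin 2)
  have hM' : ∀ c : K, e M ≠ c • 1 := fun c h => hM c (by simpa using congrArg e.symm h)
  simpa using (End.commute_of_commute_of_forall_ne_smul_one (by simp) hM'
    (hA.map e) (hB.map e)).map e.symm

theorem stmt3 (F : Type*) [Field F] (H : Subgroup (GL (Fin 2) F))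
    (hH : ∃ h₁ ∈ H, ∃ h₂ ∈ H, h₁ * h₂ ≠ h₂ * h₁)
    (g : GL (Fin 2) F) (hg : ∀ h ∈ H, g * h = h * g) :
    ∃ c : Fˣ, (g : Matrix (Fin 2) (Fin 2) F) = (c : F) • (1 : Matrix (Fin 2) (Fin 2) F)
      ∧ IsSquare (g : Matrix (Fin 2) (Fin 2) F).det := by
  obtain ⟨c, hc⟩ : ∃ c : F, (g : Matrix (Fin 2) (Fin 2) F) = c • 1 := by
    by_contra! hg_scalar
    obtain ⟨h₁, hh₁, h₂, hh₂, hne⟩ := hH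
    exact hne <| Units.ext <| Matrix.commute_of_commute_of_forall_ne_smul_one hg_scalar
      (congrArg Units.val (hg h₁ hh₁)) (congrArg Units.val (hg h₂ hh₂))
  have hc0 : c ≠ 0 := by
    rintro rfl
    simp only [zero_smul] at hc
    exact g.ne_zero hc
  refine ⟨Units.mk0 c hc0, hc, ?_⟩
  rw [hc, Matrix.det_smul, Fintype.card_fin, Matrix.det_one, mul_one]
  exact IsSquare.sq c
end

section
/- Let p be a prime and M ∈ GL₂(ZMod p) with M^p = 1 and M ≠ 1. Then M has trace 2 and determinant 1, and M is conjugate in GL₂(ZMod p) to the matrix !![1, 1; 0, 1]. -/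
theorem stmt4 (p : ℕ) [Fact p.Prime] (M : GL (Fin 2) (ZMod p))
    (hMp : M ^ p = 1) (hM : M ≠ 1) :
    (M : Matrix (Fin 2) (Fin 2) (ZMod p)).trace = 2
    ∧ (M : Matrix (Fin 2) (Fin 2) (ZMod p)).det = 1
    ∧ ∃ g : GL (Fin 2) (ZMod p),
        ((g * M * g⁻¹ : GL (Fin 2) (ZMod p)) : Matrix (Fin 2) (Fin 2) (ZMod p))
          = !![1, 1; 0, 1] := by
  set A : Matrix (Fin 2) (Fin 2) (ZMod p) := (M : Matrix (Fin 2) (Fin 2) (ZMod p)) with hA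
  have hAp : A ^ p = 1 := by
    have := congrArg (Units.val) hMp
    simpa [Units.val_pow_eq_pow_val] using this
  have hNp : (A - 1) ^ p = 0 := by
    rw [sub_pow_char_of_commute p (Commute.one_right A), hAp, one_pow, sub_self]
  have hNnil : IsNilpotent (A - 1) := ⟨p, hNp⟩
  have htr : (A - 1).trace = 0 := (Matrix.isNilpotent_trace_of_isNilpotent hNnil).eq_zero
  have hdet : (A - 1).det = 0 := by
    have h1 : IsNilpotent (A - 1).det := ⟨p, by rw [← Matrix.det_pow, hNp]; simp⟩
    exact h1.eq_zero
  obtain ⟨a, b, c, d, hNeta⟩ : ∃ a b c d, A - 1 = !![a, b; c, d] :=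
    ⟨_, _, _, _, Matrix.eta_fin_two (A - 1)⟩
  have htr' : a + d = 0 := by
    rw [hNeta, Matrix.trace_fin_two_of] at htr; exact htr
  have hdet' : a * d - b * c = 0 := by
    rw [hNeta, Matrix.det_fin_two_of] at hdet; exact hdet
  have hAeta : A = !![a + 1, b; c, d + 1] := by
    have : A = !![a, b; c, d] + 1 := by rw [← hNeta]; abel
    rw [this]
    ext i j
    fin_cases i <;> fin_cases j <;> simp [Matrix.one_apply]
  refine ⟨?_, ?_, ?_⟩
  · rw [hAeta, Matrix.trace_fin_two_of]
    linear_combination htr'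
  · rw [hAeta, Matrix.det_fin_two_of]
    linear_combination hdet' + htr'
  · -- conjugation
    have hNne : ¬(a = 0 ∧ b = 0 ∧ c = 0 ∧ d = 0) := by
      rintro ⟨h1, h2, h3, h4⟩
      apply hM
      apply Units.val_eq_one.mp
      show A = 1
      rw [hAeta, h1, h2, h3, h4]
      ext i j
      fin_cases i <;> fin_cases j <;> simp [Matrix.one_apply]
    by_cases hb0 : b ≠ 0
    · set P : Matrix (Fin 2) (Fin 2) (ZMod p) := !![b, 0; -a, 1] with hP
      have hdP : P.det ≠ 0 := by
        rw [hP, Matrix.det_fin_two_of]; simpa using hb0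
      refine ⟨(Matrix.GeneralLinearGroup.mkOfDetNeZero P hdP)⁻¹, ?_⟩
      set gU : GL (Fin 2) (ZMod p) :=
        Matrix.GeneralLinearGroup.mkOfDetNeZero P hdP with hgU
      have hgUval : (gU : Matrix (Fin 2) (Fin 2) (ZMod p)) = P := rfl
      have key : A * P = P * !![1, 1; 0, 1] := by
        rw [hAeta, hP]
        ext i j
        fin_cases i <;> fin_cases j <;>
          simp [Matrix.mul_apply, Fin.sum_univ_two]
        · ring_nf
        · linear_combination -hdet'
        · linear_combination htr'
      calc ((gU⁻¹ * M * gU⁻¹⁻¹ : GL (Fin 2) (ZMod p)) : Matrix (Fin 2) (Fin 2) (ZMod p))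
          = P⁻¹ * A * P := by
            rw [inv_inv]
            simp only [Units.val_mul, hA]
            rw [← hgUval, Matrix.coe_units_inv, hgUval]
        _ = P⁻¹ * (P * !![1, 1; 0, 1]) := by rw [mul_assoc, key]
        _ = !![1, 1; 0, 1] := by
            rw [← mul_assoc, Matrix.nonsing_inv_mul P (Ne.isUnit hdP), one_mul]
    · push_neg at hb0
      have ha0 : a = 0 := by
        have h2 : a * a = 0 := by linear_combination a * htr' - hdet' - c * hb0
        exact (mul_self_eq_zero).mp h2
      have hd0 : d = 0 := by linear_combination htr' - ha0
      have hc0 : c ≠ 0 := fun h => hNne ⟨ha0, hb0, h, hd0⟩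
      set P : Matrix (Fin 2) (Fin 2) (ZMod p) := !![0, 1; c, 0] with hP
      have hdP : P.det ≠ 0 := by
        rw [hP, Matrix.det_fin_two_of]; simpa using hc0
      refine ⟨(Matrix.GeneralLinearGroup.mkOfDetNeZero P hdP)⁻¹, ?_⟩
      set gU : GL (Fin 2) (ZMod p) :=
        Matrix.GeneralLinearGroup.mkOfDetNeZero P hdP with hgU
      have hgUval : (gU : Matrix (Fin 2) (Fin 2) (ZMod p)) = P := rfl
      have key : A * P = P * !![1, 1; 0, 1] := by
        rw [hAeta, ha0, hb0, hd0, hP]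
        ext i j
        fin_cases i <;> fin_cases j <;>
          simp [Matrix.mul_apply, Fin.sum_univ_two]
      calc ((gU⁻¹ * M * gU⁻¹⁻¹ : GL (Fin 2) (ZMod p)) : Matrix (Fin 2) (Fin 2) (ZMod p))
          = P⁻¹ * A * P := by
            rw [inv_inv]
            simp only [Units.val_mul, hA]
            rw [← hgUval, Matrix.coe_units_inv, hgUval]
        _ = P⁻¹ * (P * !![1, 1; 0, 1]) := by rw [mul_assoc, key]
        _ = !![1, 1; 0, 1] := by
            rw [← mul_assoc, Matrix.nonsing_inv_mul P (Ne.isUnit hdP), one_mul]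
end

section
/- Let p be an odd prime and M ∈ GL₂(ZMod p) with p dividing the order of M. Then the characteristic polynomial of M has a double root a ∈ (ZMod p)ˣ with 2a = trace M, and M is conjugate in GL₂(ZMod p) to a matrix of the form !![a, b; 0, a] with b ≠ 0. In particular, the order of M divides p(p−1). -/
/-!
If `p ∣ orderOf M`, a suitable power `N` of `M` has order exactly `p`. In characteristic `p`,
`(N - 1) ^ p = N ^ p - 1 = 0`, so `N - 1` is a nonzero nilpotent `2 × 2` matrix, hence conjugate
to `!![0, 1; 0, 0]`. The same conjugation takes `M`, which commutes with `N - 1`, into the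
centralizer of `!![0, 1; 0, 0]`, i.e. to the form `!![a, b; 0, a]`. Here `b ≠ 0`, since otherwise
`M` would be scalar of order dividing `p - 1`; and `!![a, b; 0, a] ^ (p * (p - 1)) = 1`.
-/

open Polynomial Matrix

namespace Matrix

theorem pow_fin_two_scalar_upper {R : Type*} [CommRing R] (a b : R) (n : ℕ) :
    !![a, b; 0, a] ^ n = !![a ^ n, n * a ^ (n - 1) * b; 0, a ^ n] := by
  induction n with
  | zero => exact (one_fin_two (α := R)).trans (by simp)
  | succ n ih =>
    rw [pow_succ, ih, mul_fin_two]
    rcases n with _ | n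
    · simp
    · congr <;> push_cast <;> ring

theorem eq_of_commute_fin_two_single {R : Type*} [Semiring R] {P : Matrix (Fin 2) (Fin 2) R}
    (h : Commute P !![0, 1; 0, 0]) : P = !![P 0 0, P 0 1; 0, P 0 0] := by
  have h10 : P 1 0 = 0 := by simpa [mul_apply] using (congrFun₂ h.eq 0 0).symm
  have h11 : P 1 1 = P 0 0 := by simpa [mul_apply] using (congrFun₂ h.eq 0 1).symm
  conv_lhs => rw [eta_fin_two P, h10, h11]

theorem exists_mul_eq_mul_single_of_isNilpotent {K : Type*} [Field K]
    {D : Matrix (Fin 2) (Fin 2) K} (hD : D ≠ 0) (hnil : IsNilpotent D) :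
    ∃ u : GL (Fin 2) K,
      D * (u : Matrix (Fin 2) (Fin 2) K) = (u : Matrix (Fin 2) (Fin 2) K) * !![0, 1; 0, 0] := by
  have htr : D 0 0 + D 1 1 = 0 := by
    simpa [trace_fin_two] using (isNilpotent_trace_of_isNilpotent hnil).eq_zero
  have hdet : D 0 0 * D 1 1 - D 0 1 * D 1 0 = 0 := by
    obtain ⟨n, hn⟩ := hnil
    have hdet_nil : IsNilpotent D.det := ⟨n, by rw [← det_pow, hn, det_zero]⟩
    simpa [det_fin_two] using hdet_nil.eq_zero
  have h11 : D 1 1 = - D 0 0 := by linear_combination htr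
  rw [eta_fin_two D, h11] at hD ⊢
  rw [h11] at hdet
  by_cases hz : D 1 0 = 0
  · have hx : D 0 0 = 0 := by simpa [hz] using hdet
    have hy : D 0 1 ≠ 0 := fun hy ↦ hD <| by
      ext i j; fin_cases i <;> fin_cases j <;> simp [hx, hy, hz]
    refine ⟨GeneralLinearGroup.mk'' !![D 0 1, 0; 0, 1] (by simpa using hy), ?_⟩
    rw [GeneralLinearGroup.val_mk'', mul_fin_two, mul_fin_two]
    simp [hx, hz]
  · refine ⟨GeneralLinearGroup.mk'' !![D 0 0, 1; D 1 0, 0] (by simpa using hz), ?_⟩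
    rw [GeneralLinearGroup.val_mk'', mul_fin_two, mul_fin_two]
    have hsq : D 0 0 * D 0 0 + D 0 1 * D 1 0 = 0 := by linear_combination -hdet
    simp [hsq, mul_comm (D 1 0)]

end Matrix

section FiniteField

variable {K : Type*} [Field K] [Fintype K] {a : K}

theorem orderOf_fin_two_scalar_upper_dvd (p : ℕ) [CharP K p] (ha : a ≠ 0) (b : K) :
    orderOf !![a, b; 0, a] ∣ p * (Fintype.card K - 1) := by
  apply orderOf_dvd_of_pow_eq_one
  rw [pow_fin_two_scalar_upper, pow_mul', FiniteField.pow_card_sub_one_eq_one a ha, one_pow,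
    Nat.cast_mul, CharP.cast_eq_zero, zero_mul, zero_mul, zero_mul]
  exact one_fin_two.symm

theorem orderOf_fin_two_scalar_dvd (ha : a ≠ 0) :
    orderOf !![a, 0; 0, a] ∣ Fintype.card K - 1 := by
  apply orderOf_dvd_of_pow_eq_one
  rw [pow_fin_two_scalar_upper, FiniteField.pow_card_sub_one_eq_one a ha, mul_zero]
  exact one_fin_two.symm

end FiniteField

theorem Matrix.GeneralLinearGroup.exists_conj_eq_fin_two_of_dvd_orderOf {K : Type*} [Field K]
    (p : ℕ) [Fact p.Prime] [CharP K p] {M : GL (Fin 2) K} (hM : IsOfFinOrder M)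
    (hpM : p ∣ orderOf M) :
    ∃ g : GL (Fin 2) K, ∃ a b : K,
      ((g * M * g⁻¹ : GL (Fin 2) K) : Matrix (Fin 2) (Fin 2) K) = !![a, b; 0, a] := by
  set N := M ^ (orderOf M / p)
  have hN : orderOf N = p := orderOf_pow_orderOf_div hM.orderOf_pos.ne' hpM
  set D := (N : Matrix (Fin 2) (Fin 2) K) - 1
  have hD : D ≠ 0 := by
    refine sub_ne_zero.mpr fun h ↦ (Fact.out : p.Prime).ne_one ?_
    rw [← hN, orderOf_eq_one_iff]
    exact Units.ext h
  have hDnil : IsNilpotent D := by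
    refine ⟨p, ?_⟩
    rw [sub_pow_char_of_commute _ (Commute.one_right _), ← Units.val_pow_eq_pow_val, ← hN,
      pow_orderOf_eq_one, Units.val_one, one_pow, sub_self]
  obtain ⟨u, hu⟩ := exists_mul_eq_mul_single_of_isNilpotent hD hDnil
  have hMD : Commute (M : Matrix (Fin 2) (Fin 2) K) D :=
    ((Commute.refl M).pow_right _).units_val.sub_right (Commute.one_right _)
  refine ⟨u⁻¹, _, _, eq_of_commute_fin_two_single ?_⟩
  have hE : !![0, 1; 0, 0] =
      ((u⁻¹ : GL (Fin 2) K) : Matrix (Fin 2) (Fin 2) K) * D * (u : Matrix (Fin 2) (Fin 2) K) := by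
    rw [mul_assoc, hu, ← mul_assoc, Units.inv_mul, one_mul]
  rw [hE, inv_inv]
  simp only [Units.val_mul, Commute, SemiconjBy, mul_assoc, Units.mul_inv_cancel_left]
  rw [← mul_assoc (M : Matrix _ _ K) D, hMD.eq, mul_assoc]

theorem stmt5_general (p : ℕ) [Fact p.Prime] (M : GL (Fin 2) (ZMod p))
    (hord : p ∣ orderOf M) :
    ∃ a : (ZMod p)ˣ,
      (M : Matrix (Fin 2) (Fin 2) (ZMod p)).charpoly = (X - C (a : ZMod p)) ^ 2
      ∧ 2 * (a : ZMod p) = (M : Matrix (Fin 2) (Fin 2) (ZMod p)).trace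
      ∧ (∃ b : ZMod p, b ≠ 0 ∧ ∃ g : GL (Fin 2) (ZMod p),
          ((g * M * g⁻¹ : GL (Fin 2) (ZMod p)) : Matrix (Fin 2) (Fin 2) (ZMod p))
            = !![(a : ZMod p), b; 0, (a : ZMod p)])
      ∧ orderOf M ∣ p * (p - 1) := by
  obtain ⟨g, a, b, hJ⟩ :=
    GeneralLinearGroup.exists_conj_eq_fin_two_of_dvd_orderOf p (isOfFinOrder_of_finite M) hord
  have hcharpoly : (M : Matrix (Fin 2) (Fin 2) (ZMod p)).charpoly = !![a, b; 0, a].charpoly := by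
    rw [← hJ]; simp [coe_units_inv]
  have htrace : (M : Matrix (Fin 2) (Fin 2) (ZMod p)).trace = !![a, b; 0, a].trace := by
    rw [← hJ, Units.val_mul, Units.val_mul, trace_mul_comm, ← mul_assoc, ← Units.val_mul,
      inv_mul_cancel, Units.val_one, one_mul]
  have horder : orderOf M = orderOf !![a, b; 0, a] := by
    rw [← hJ, orderOf_units]
    exact SemiconjBy.orderOf_eq g (by simp [SemiconjBy])
  have ha : a ≠ 0 := by
    have hdet := (isUnit_iff_isUnit_det _).mp (hJ ▸ (g * M * g⁻¹).isUnit)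
    simpa using hdet
  have hb : b ≠ 0 := by
    rintro rfl
    have hp := (Fact.out : p.Prime).one_lt
    have := Nat.le_of_dvd (by omega)
      (hord.trans (horder ▸ ZMod.card p ▸ orderOf_fin_two_scalar_dvd ha))
    omega
  refine ⟨Units.mk0 a ha, ?_, ?_, ⟨b, hb, g, hJ⟩, ?_⟩
  · rw [hcharpoly, charpoly_fin_two, trace_fin_two_of, det_fin_two_of, Units.val_mk0, mul_zero,
      sub_zero, C_add, C_mul]
    ring
  · rw [htrace, trace_fin_two_of, Units.val_mk0]
    ring
  · simpa [horder] using orderOf_fin_two_scalar_upper_dvd p ha b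

theorem stmt5 (p : ℕ) [Fact p.Prime] (hp : Odd p) (M : GL (Fin 2) (ZMod p))
    (hord : p ∣ orderOf M) :
    ∃ a : (ZMod p)ˣ,
      (M : Matrix (Fin 2) (Fin 2) (ZMod p)).charpoly = (X - C (a : ZMod p)) ^ 2
      ∧ 2 * (a : ZMod p) = (M : Matrix (Fin 2) (Fin 2) (ZMod p)).trace
      ∧ (∃ b : ZMod p, b ≠ 0 ∧ ∃ g : GL (Fin 2) (ZMod p),
          ((g * M * g⁻¹ : GL (Fin 2) (ZMod p)) : Matrix (Fin 2) (Fin 2) (ZMod p))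
            = !![(a : ZMod p), b; 0, (a : ZMod p)])
      ∧ orderOf M ∣ p * (p - 1) :=
  stmt5_general p M hord
end

section
/- Let p be an odd prime, a ∈ (ZMod p)ˣ, and h, h' ∈ (ZMod p)ˣ both nonzero. If g ∈ GL₂(ZMod p) satisfies g · !![a, h'; 0, a] · g⁻¹ = !![a, h; 0, a], then det g · (h/h') is a square in (ZMod p)ˣ; equivalently, the class of det g modulo squares equals the class of h'/h. -/
theorem stmt6 (p : ℕ) [Fact p.Prime] (hp : Odd p) (a h h' : (ZMod p)ˣ)
    (g : GL (Fin 2) (ZMod p))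
    (hconj : (g : Matrix (Fin 2) (Fin 2) (ZMod p)) * !![(a : ZMod p), (h' : ZMod p); 0, (a : ZMod p)]
        * ((g⁻¹ : GL (Fin 2) (ZMod p)) : Matrix (Fin 2) (Fin 2) (ZMod p))
      = !![(a : ZMod p), (h : ZMod p); 0, (a : ZMod p)]) :
    ∃ mu : (ZMod p)ˣ,
      (mu : ZMod p) ^ 2
        = (g : Matrix (Fin 2) (Fin 2) (ZMod p)).det * ((h : ZMod p) * (h' : ZMod p)⁻¹) := by
  have h1 : (g : Matrix (Fin 2) (Fin 2) (ZMod p)) * !![(a : ZMod p), (h' : ZMod p); 0, (a : ZMod p)]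
      = !![(a : ZMod p), (h : ZMod p); 0, (a : ZMod p)] * (g : Matrix (Fin 2) (Fin 2) (ZMod p)) := by
    have hinv : ((g⁻¹ : GL (Fin 2) (ZMod p)) : Matrix (Fin 2) (Fin 2) (ZMod p))
        * (g : Matrix (Fin 2) (Fin 2) (ZMod p)) = 1 := by
      exact_mod_cast g.inv_mul
    conv_rhs => rw [← hconj]
    rw [Matrix.mul_assoc, hinv, Matrix.mul_one]
  set G := (g : Matrix (Fin 2) (Fin 2) (ZMod p)) with hG
  have hGe : G = !![G 0 0, G 0 1; G 1 0, G 1 1] := Matrix.eta_fin_two G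
  rw [hGe] at h1
  rw [Matrix.mul_fin_two, Matrix.mul_fin_two] at h1
  have e00 : G 0 0 * (a : ZMod p) + G 0 1 * 0 = (a : ZMod p) * G 0 0 + (h : ZMod p) * G 1 0 := by
    have := congrFun (congrFun h1 0) 0
    simpa using this
  have e01 : G 0 0 * (h' : ZMod p) + G 0 1 * (a : ZMod p)
      = (a : ZMod p) * G 0 1 + (h : ZMod p) * G 1 1 := by
    have := congrFun (congrFun h1 0) 1
    simpa using this
  have hg10 : G 1 0 = 0 := by
    have : (h : ZMod p) * G 1 0 = 0 := by linear_combination -e00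
    rcases mul_eq_zero.mp this with hc | hc
    · exact absurd hc h.ne_zero
    · exact hc
  have hdiag : (h' : ZMod p) * G 0 0 = (h : ZMod p) * G 1 1 := by linear_combination e01
  have hdet : G.det = G 0 0 * G 1 1 := by
    rw [Matrix.det_fin_two, hg10]; ring
  have hdetu : IsUnit G.det := by
    exact (Matrix.isUnit_iff_isUnit_det G).mp (Units.isUnit g)
  have hu : IsUnit (G 0 0) := by
    rw [hdet] at hdetu
    exact isUnit_of_mul_isUnit_left hdetu
  refine ⟨hu.unit, ?_⟩
  have hG00 : (hu.unit : ZMod p) = G 0 0 := rfl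
  rw [hG00, hdet]
  have hh' : (h' : ZMod p) ≠ 0 := h'.ne_zero
  field_simp
  linear_combination (G 0 0) * hdiag
end

section
/- Let G be a group and χE, χE', χC, χC' : G →* (ZMod 5)ˣ group homomorphisms such that: χE·χE' = χC·χC'; the common product χ := χE·χE' has order 4; χE' has order 4; ker χE = ker χC; ker χE' = ker χC'; and ker χE ≠ ker χE'. Then χE = χC and χE' = χC'. -/
/-!
Two characters `G →* (ZMod 5)ˣ` with the same kernel have isomorphic cyclic images, and the
only automorphisms of a subgroup of the cyclic group of order 4 are `x ↦ x` and `x ↦ x⁻¹`;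
so each of `χC`, `χC'` is its partner or the inverse of it. Inverting `χE'` alone, or both
characters, would make `χE'` resp. `χE * χE'` equal to its own inverse, against order 4;
inverting only `χE` forces `χE = χE⁻¹`, so `χC = χE` anyway.
-/

theorem MonoidHom.eq_zpow_of_ker_le_of_mem_zpowers {G M : Type*} [Group G] [CommGroup M]
    {χ ψ : G →* M} (hker : χ.ker ≤ ψ.ker) {g₀ : G}
    (hgen : ∀ g, χ g ∈ Subgroup.zpowers (χ g₀)) {j : ℤ} (hj : ψ g₀ = χ g₀ ^ j) :
    ψ = χ ^ j := by
  ext g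
  obtain ⟨k, hk⟩ := Subgroup.mem_zpowers_iff.mp (hgen g)
  have hmem : g₀ ^ k * g⁻¹ ∈ ψ.ker :=
    hker <| by rw [MonoidHom.mem_ker, map_mul, map_inv, map_zpow, hk, mul_inv_cancel]
  rw [MonoidHom.mem_ker, map_mul, map_inv, map_zpow, mul_inv_eq_one] at hmem
  rw [MonoidHom.zpow_apply, ← hmem, hj, ← hk, ← zpow_mul, ← zpow_mul, mul_comm]

theorem ZMod.units_five_eq_or_eq_inv_of_iff :
    ∀ x y : (ZMod 5)ˣ, (x = 1 ↔ y = 1) → (x ^ 2 = 1 ↔ y ^ 2 = 1) → y = x ∨ y = x⁻¹ := by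
  decide

theorem MonoidHom.eq_or_eq_inv_of_ker_eq {G : Type*} [Group G] {χ ψ : G →* (ZMod 5)ˣ}
    (hker : χ.ker = ψ.ker) : ψ = χ ∨ ψ = χ⁻¹ := by
  have : Fact (Nat.Prime 5) := ⟨Nat.prime_five⟩
  obtain ⟨⟨_, g₀, rfl⟩, hgen⟩ := IsCyclic.exists_generator (α := χ.range)
  have hgen' : ∀ g, χ g ∈ Subgroup.zpowers (χ g₀) := fun g => by
    obtain ⟨k, hk⟩ := Subgroup.mem_zpowers_iff.mp (hgen ⟨χ g, g, rfl⟩)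
    exact Subgroup.mem_zpowers_iff.mpr ⟨k, congrArg Subtype.val hk⟩
  have hpow (n : ℕ) : χ g₀ ^ n = 1 ↔ ψ g₀ ^ n = 1 := by
    simp only [← map_pow, ← MonoidHom.mem_ker, hker]
  rcases ZMod.units_five_eq_or_eq_inv_of_iff _ _ (by simpa using hpow 1) (hpow 2) with h | h
  · left
    simpa using MonoidHom.eq_zpow_of_ker_le_of_mem_zpowers hker.le hgen' (j := 1) (by simpa)
  · right
    simpa using MonoidHom.eq_zpow_of_ker_le_of_mem_zpowers hker.le hgen' (j := -1) (by simpa)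

theorem ne_inv_of_orderOf_eq_four {M : Type*} [Group M] {a : M} (h : orderOf a = 4) :
    a ≠ a⁻¹ := fun h_inv => by
  have := orderOf_dvd_of_pow_eq_one (by rwa [pow_two, ← eq_inv_iff_mul_eq_one] : a ^ 2 = 1)
  simp [h] at this

theorem stmt8_general (G : Type*) [Group G]
    (χE χE' χC χC' : G →* (ZMod 5)ˣ)
    (hprod : χE * χE' = χC * χC')
    (hord : orderOf (χE * χE') = 4)
    (hordE' : orderOf χE' = 4)
    (hkE : χE.ker = χC.ker)
    (hkE' : χE'.ker = χC'.ker) :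
    χE = χC ∧ χE' = χC' := by
  rcases MonoidHom.eq_or_eq_inv_of_ker_eq hkE with rfl | rfl <;>
    rcases MonoidHom.eq_or_eq_inv_of_ker_eq hkE' with rfl | rfl
  · exact ⟨rfl, rfl⟩
  · exact absurd (mul_left_cancel hprod) (ne_inv_of_orderOf_eq_four hordE')
  · exact ⟨mul_right_cancel hprod, rfl⟩
  · exact absurd (hprod.trans (mul_inv χE χE').symm) (ne_inv_of_orderOf_eq_four hord)

theorem stmt8 (G : Type*) [Group G]
    (χE χE' χC χC' : G →* (ZMod 5)ˣ)
    (hprod : χE * χE' = χC * χC')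
    (hord : orderOf (χE * χE') = 4)
    (hordE' : orderOf χE' = 4)
    (hkE : χE.ker = χC.ker)
    (hkE' : χE'.ker = χC'.ker)
    (hne : χE.ker ≠ χE'.ker) :
    χE = χC ∧ χE' = χC' :=
  stmt8_general G χE χE' χC χC' hprod hord hordE' hkE hkE'
end
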